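/- arXiv:1205.0445 — 2 statements merged into one kernel-verified Lean document; each statement's English description precedes it below -/
import Mathlib

section
/- Let B be a nonempty subset of E, η ∈ E ∖ B, and D ⊆ E. Then E_η[ Σ_{n=0}^{ℍ_B − 1} 1{Y_n ∈ D}/λ(Y_n) ] ≤ μ(D) / Cap({η}, B); that is, the expected time the continuous-time chain started at η spends in D before hitting B is at most μ(D)/Cap({η},B). -/
open scoped Classical
open Filter Topology
open scoped ENNReal

noncomputable section

/-- The weight of the discrete-time path `γ` (consisting of `n` steps) under the transition
kernel `p`: the probability that the chain started at `γ 0` follows exactly this path. -/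
def pathWeight {E : Type*} (p : E → E → ℝ) {n : ℕ} (γ : Fin (n + 1) → E) : ℝ :=
  ∏ i : Fin n, p (γ i.castSucc) (γ i.succ)

/-- `retProb p η S T` is the probability that the chain with transition kernel `p` started at
`η` enters the set `S` at some positive time, and does so for the first time at a state
belonging to `T`.  For `T ⊆ S` this is `P_η[ℍ⁺_S < ∞ and Y_{ℍ⁺_S} ∈ T]`; for disjoint sets
`A`, `B`, taking `S = A ∪ B`, `T = B` gives `P_η[ℍ⁺_B < ℍ⁺_A]`.  It is written as a sum over
all finite paths. -/
def retProb {E : Type*} (p : E → E → ℝ) (η : E) (S T : Set E) : ℝ :=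
  ∑' x : Σ n : ℕ, Fin (n + 2) → E,
    if x.2 0 = η ∧ (∀ j : Fin (x.1 + 2), 0 < (j : ℕ) → (j : ℕ) < x.1 + 1 → x.2 j ∉ S) ∧
        x.2 (Fin.last (x.1 + 1)) ∈ T
      then pathWeight p x.2 else 0

/-- `hitProb p η A B = P_η[ℍ_A < ℍ_B]`: the probability that the chain with kernel `p`
started at `η` hits `A` (a hit at time `0` being allowed) strictly before hitting `B`,
written as a sum over all finite paths which stay outside `A ∪ B` before ending in `A`. -/
def hitProb {E : Type*} (p : E → E → ℝ) (η : E) (A B : Set E) : ℝ :=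
  ∑' x : Σ n : ℕ, Fin (n + 1) → E,
    if x.2 0 = η ∧ (∀ j : Fin (x.1 + 1), (j : ℕ) < x.1 → x.2 j ∉ A ∪ B) ∧
        x.2 (Fin.last x.1) ∈ A
      then pathWeight p x.2 else 0

/-- The capacity `Cap(A,B) = Σ_{η ∈ A} M(η) P_η[ℍ⁺_B < ℍ⁺_A]` between two disjoint sets,
for the chain with jump kernel `p` and invariant measure `M` of the jump chain. -/
def cap {E : Type*} (p : E → E → ℝ) (M : E → ℝ) (A B : Set E) : ℝ :=
  ∑' η : A, M η.1 * retProb p η.1 (A ∪ B) B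

/-- The jump probabilities `p(η,ξ) = R(η,ξ)/λ(η)`, `λ(η) = -R(η,η)`, of a rate matrix `R`. -/
def jumpProb {E : Type*} (R : E → E → ℝ) (η ξ : E) : ℝ :=
  if η = ξ then 0 else R η ξ / (-R η η)

/-- Irreducibility of a discrete-time chain: any two states are joined by a path of
positive probability. -/
def MCIrreducible {E : Type*} (p : E → E → ℝ) : Prop :=
  ∀ η ξ : E, ∃ (n : ℕ) (γ : Fin (n + 1) → E),
    γ 0 = η ∧ γ (Fin.last n) = ξ ∧ 0 < pathWeight p γ

/-- `R` is a rate matrix: nonnegative off-diagonal entries, finite strictly positive holding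
rates `λ(η) = -R(η,η)`, and rows summing to zero. -/
structure IsRateMatrix {E : Type*} (R : E → E → ℝ) : Prop where
  offdiag_nonneg : ∀ η ξ, η ≠ ξ → 0 ≤ R η ξ
  diag_neg : ∀ η, R η η < 0
  row_summable : ∀ η, Summable (R η)
  row_sum : ∀ η, ∑' ξ, R η ξ = 0

/-- `μ` is a stationary probability measure for the rate matrix `R`, charging every point,
with summable holding rates:  `Σ_η λ(η) μ(η) < ∞`. -/
structure IsRateStationary {E : Type*} (R : E → E → ℝ) (μ : E → ℝ) : Prop where
  pos : ∀ η, 0 < μ η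
  summable : Summable μ
  total : ∑' η, μ η = 1
  flux_summable : ∀ ξ, Summable fun η => μ η * R η ξ
  stat : ∀ ξ, ∑' η, μ η * R η ξ = 0
  lam_summable : Summable fun η => -R η η * μ η

/-- The adjoint rates `R*(η,ξ) = μ(ξ) R(ξ,η) / μ(η)` (same holding rates). -/
def adjRate {E : Type*} (R : E → E → ℝ) (μ : E → ℝ) (η ξ : E) : ℝ :=
  if η = ξ then R η η else μ ξ * R ξ η / μ η

/-- The expected time `E_η[ Σ_{n=0}^{ℍ_B − 1} 1{Y_n ∈ D}/λ(Y_n) ]` spent in `D` by the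
continuous-time chain (jump kernel `p`, holding rates `lam`) started at `η` before
hitting `B`, as an `ℝ≥0∞`-valued sum over all finite paths staying outside `B`. -/
def occupationTime {E : Type*} (p : E → E → ℝ) (lam : E → ℝ) (D B : Set E) (η : E) : ℝ≥0∞ :=
  ∑' x : Σ n : ℕ, Fin (n + 1) → E,
    ENNReal.ofReal
      ((if x.2 0 = η ∧ (∀ j, x.2 j ∉ B) ∧ x.2 (Fin.last x.1) ∈ D then pathWeight p x.2 else 0)
        / lam (x.2 (Fin.last x.1)))

/-!
Let `G(a,b)` be the expected number of visits to `b` before `ℍ_B` of the jump chain started at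
`a`, a sum of weights of walks, and `M = λμ` its invariant measure. Reversing walks in time turns
`M η G(η,ξ)` into `M ξ G*(ξ,η)` for the time-reversed chain, and splitting the reversed walks at
their first visit to `η` gives `M η G(η,ξ) ≤ M ξ G(η,η)`. Hence the occupation time
`Σ_{ξ∈D} G(η,ξ)/λ(ξ)` is at most `μ(D) G(η,η) / M η`. A loop at `η` avoiding `B` followed by an
escape from `η` to `B` is a walk stopped at its first visit to `B`, and it determines the loop and
the escape. Stopped walks form a prefix-free set, so their total weight is at most `1`; thus
`G(η,η) P_η[ℍ⁺_B < ℍ⁺_η] ≤ 1`, that is `G(η,η) ≤ M η / Cap({η},B)`.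
-/

namespace JumpChain

open Function

variable {E : Type*}

section Walks

variable {P : E → E → ℝ≥0∞}

/-- A walk is encoded by its starting state `a` and the list `l` of the states it visits
afterwards, so that it ends at `l.getLastD a`. -/
def walkWeight (P : E → E → ℝ≥0∞) : E → List E → ℝ≥0∞
  | _, [] => 1
  | a, b :: l => P a b * walkWeight P b l

@[simp] lemma walkWeight_nil (a : E) : walkWeight P a [] = 1 := rfl

@[simp] lemma walkWeight_cons (a b : E) (l : List E) :
    walkWeight P a (b :: l) = P a b * walkWeight P b l := rfl

lemma getLastD_append (u v : List E) (a : E) :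
    (u ++ v).getLastD a = v.getLastD (u.getLastD a) := by
  induction u generalizing a with
  | nil => rfl
  | cons b u ih => simp only [List.cons_append, List.getLastD_cons, ih]

lemma getLastD_mem {l : List E} (hl : l ≠ []) (a : E) : l.getLastD a ∈ l := by
  obtain ⟨b, l, rfl⟩ := List.exists_cons_of_ne_nil hl
  rw [List.getLastD_cons]
  exact List.getLastD_mem_cons

lemma walkWeight_append (a : E) (u v : List E) :
    walkWeight P a (u ++ v) = walkWeight P a u * walkWeight P (u.getLastD a) v := by
  induction u generalizing a with
  | nil => simp
  | cons b u ih =>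
    rw [List.cons_append, walkWeight_cons, ih, List.getLastD_cons, walkWeight_cons, mul_assoc]

def walkSum (P : E → E → ℝ≥0∞) (a : E) (S : Set (List E)) : ℝ≥0∞ :=
  ∑' l : S, walkWeight P a l

lemma tsum_prod_mul {α β : Type*} (f : α → ℝ≥0∞) (g : β → ℝ≥0∞) :
    ∑' x : α × β, f x.1 * g x.2 = (∑' a, f a) * ∑' b, g b := by
  simp only [ENNReal.tsum_prod', ENNReal.tsum_mul_left, ENNReal.tsum_mul_right]

lemma walkSum_eq_tsum_cons (a : E) {S : Set (List E)} (hS : [] ∉ S) :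
    walkSum P a S = ∑' b, P a b * walkSum P b (List.cons b ⁻¹' S) := by
  have hcons : Injective fun x : E × List E => x.1 :: x.2 := fun x y h => by
    simpa [Prod.ext_iff] using h
  have hsupp : support (S.indicator (walkWeight P a)) ⊆
      Set.range fun x : E × List E => x.1 :: x.2 := by
    rintro (_ | ⟨b, l⟩) h
    · exact absurd (Set.mem_of_indicator_ne_zero h) hS
    · exact ⟨(b, l), rfl⟩
  simp only [walkSum, tsum_subtype, ← hcons.tsum_eq hsupp, ENNReal.tsum_prod',
    ← ENNReal.tsum_mul_left]
  refine tsum_congr fun b => tsum_congr fun l => ?_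
  by_cases h : b :: l ∈ S <;> simp [Set.indicator, h]

lemma walkSum_le_one_of_subset_singleton_nil (a : E) {S : Set (List E)} (hS : S ⊆ {[]}) :
    walkSum P a S ≤ 1 :=
  (ENNReal.tsum_mono_subtype _ hS).trans (by simp)

lemma walkSum_le_one_of_length_le (hP : ∀ a, ∑' b, P a b ≤ 1) (N : ℕ) :
    ∀ (a : E) (S : Set (List E)), IsAntichain (· <+: ·) S → (∀ l ∈ S, l.length ≤ N) →
      walkSum P a S ≤ 1 := by
  induction N with
  | zero =>
    exact fun a S _ hN => walkSum_le_one_of_subset_singleton_nil a fun l hl =>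
      List.eq_nil_of_length_eq_zero (Nat.le_zero.1 (hN l hl))
  | succ N ih =>
    intro a S hS hN
    by_cases hnil : [] ∈ S
    · exact walkSum_le_one_of_subset_singleton_nil a fun l hl =>
        of_not_not fun hne => hS hnil hl (Ne.symm hne) l.nil_prefix
    rw [walkSum_eq_tsum_cons a hnil]
    refine (ENNReal.tsum_le_tsum fun b => ?_).trans
      ((tsum_congr fun b => mul_one (P a b)).le.trans (hP a))
    refine mul_le_mul_right (ih b _ ?_ fun l hl => ?_) _
    · exact hS.preimage List.cons_injective fun u v h => List.cons_prefix_cons.2 ⟨rfl, h⟩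
    · simpa using hN _ hl

lemma walkSum_le_one_of_isAntichain (hP : ∀ a, ∑' b, P a b ≤ 1) (a : E) {S : Set (List E)}
    (hS : IsAntichain (· <+: ·) S) : walkSum P a S ≤ 1 := by
  rw [walkSum, tsum_subtype]
  refine tsum_le_of_sum_le' zero_le_one fun F => ?_
  let N := F.sup List.length
  calc ∑ l ∈ F, S.indicator (walkWeight P a) l
      = ∑ l ∈ F, (S ∩ {l | l.length ≤ N}).indicator (walkWeight P a) l :=
        Finset.sum_congr rfl fun l hl => by
          have hlen : l.length ≤ N := Finset.le_sup hl
          simp [Set.indicator_apply, hlen]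
    _ ≤ walkSum P a (S ∩ {l | l.length ≤ N}) := by
        rw [walkSum, tsum_subtype]
        exact ENNReal.sum_le_tsum F
    _ ≤ 1 := walkSum_le_one_of_length_le hP N a _ (hS.subset Set.inter_subset_left)
        fun l hl => hl.2

end Walks

section Green

variable {P Q : E → E → ℝ≥0∞}

def greenPaths (B : Set E) (a b : E) : Set (List E) :=
  {l | (∀ y ∈ a :: l, y ∉ B) ∧ l.getLastD a = b}

def green (P : E → E → ℝ≥0∞) (B : Set E) (a b : E) : ℝ≥0∞ :=
  walkSum P a (greenPaths B a b)

def firstEntrancePaths (A : Set E) (a : E) : Set (List E) :=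
  {l | (∀ y ∈ (a :: l).dropLast, y ∉ A) ∧ l.getLastD a ∈ A}

def escapePaths (B : Set E) (η : E) : Set (List E) :=
  {l | (∀ y ∈ l.dropLast, y ∉ ({η} ∪ B : Set E)) ∧ l.getLastD η ∈ B}

lemma isAntichain_firstEntrancePaths (A : Set E) (a : E) :
    IsAntichain (· <+: ·) (firstEntrancePaths A a) := by
  rintro u hu _ hv hne ⟨s, rfl⟩
  have hs : s ≠ [] := by rintro rfl; exact hne (List.append_nil u).symm
  refine hv.1 _ ?_ hu.2
  rw [← List.cons_append, List.dropLast_append_of_ne_nil hs]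
  exact List.mem_append_left _ List.getLastD_mem_cons

lemma exists_mem_firstEntrancePaths_append {A : Set E} :
    ∀ {a : E} {l : List E}, l.getLastD a ∈ A → ∃ u ∈ firstEntrancePaths A a, ∃ v, l = u ++ v
  | a, [], h => ⟨[], ⟨by simp, h⟩, [], rfl⟩
  | a, b :: l, h => by
    by_cases ha : a ∈ A
    · exact ⟨[], ⟨by simp, ha⟩, b :: l, rfl⟩
    rw [List.getLastD_cons] at h
    obtain ⟨u, ⟨hu, hend⟩, v, rfl⟩ := exists_mem_firstEntrancePaths_append h
    refine ⟨b :: u, ⟨?_, by rwa [List.getLastD_cons]⟩, v, rfl⟩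
    rw [List.dropLast_cons_of_ne_nil (List.cons_ne_nil _ _)]
    exact List.forall_mem_cons.2 ⟨ha, hu⟩

lemma exists_mem_firstEntrancePaths_append_mem_greenPaths {B : Set E} {a b : E} {m : List E}
    (hm : m ∈ greenPaths B a b) :
    ∃ u ∈ firstEntrancePaths {b} a, ∃ v ∈ greenPaths B b b, m = u ++ v := by
  obtain ⟨hB, hend⟩ := hm
  obtain ⟨u, hu, v, rfl⟩ :=
    exists_mem_firstEntrancePaths_append (A := {b}) (Set.mem_singleton_iff.2 hend)
  have hub : u.getLastD a = b := hu.2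
  refine ⟨u, hu, v, ⟨List.forall_mem_cons.2 ⟨?_, fun y hy => hB y ?_⟩, ?_⟩, rfl⟩
  · exact hub ▸ hB _ (List.cons_subset_cons a (List.subset_append_left u v)
      List.getLastD_mem_cons)
  · exact List.mem_cons_of_mem a (List.mem_append_right u hy)
  · calc v.getLastD b = (u ++ v).getLastD a := by rw [getLastD_append, hub]
      _ = b := hend

lemma green_le_walkSum_mul_green (B : Set E) (a b : E) :
    green P B a b ≤ walkSum P a (firstEntrancePaths {b} a) * green P B b b := by
  choose u hu v hv hm using fun m : greenPaths B a b =>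
    exists_mem_firstEntrancePaths_append_mem_greenPaths m.2
  let split (m : greenPaths B a b) : firstEntrancePaths {b} a × greenPaths B b b :=
    (⟨u m, hu m⟩, ⟨v m, hv m⟩)
  have hsplit : Injective split := fun m m' h => by
    simp only [split, Prod.ext_iff, Subtype.ext_iff] at h
    exact Subtype.ext (by rw [hm m, hm m', h.1, h.2])
  calc green P B a b
      = ∑' m : greenPaths B a b, walkWeight P a (u m) * walkWeight P b (v m) := by
        refine tsum_congr fun m => ?_
        rw [hm m, walkWeight_append, (hu m).2]
    _ ≤ ∑' x : firstEntrancePaths {b} a × greenPaths B b b,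
          walkWeight P a x.1 * walkWeight P b x.2 :=
        ENNReal.tsum_comp_le_tsum_of_injective hsplit
          fun x => walkWeight P a x.1 * walkWeight P b x.2
    _ = _ := tsum_prod_mul (fun l : firstEntrancePaths {b} a => walkWeight P a l)
        (fun l : greenPaths B b b => walkWeight P b l)

lemma cons_getLastD_reverse_tail (a : E) (l : List E) :
    l.getLastD a :: (a :: l).reverse.tail = (a :: l).reverse :=
  List.cons_head?_tail (by simp [List.head?_reverse])

lemma getLastD_reverse_tail (a : E) (l : List E) :
    (a :: l).reverse.tail.getLastD (l.getLastD a) = a := by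
  have h := congrArg List.getLast? (cons_getLastD_reverse_tail a l)
  rw [List.getLast?_cons, List.getLast?_reverse, List.head?_cons,
    ← List.getLastD_eq_getLast?] at h
  exact Option.some_injective _ h

lemma reverse_tail_reverse_tail {a b : E} {l : List E} (hl : l.getLastD a = b) :
    (b :: (a :: l).reverse.tail).reverse.tail = l := by
  rw [← hl, cons_getLastD_reverse_tail, List.reverse_reverse, List.tail_cons]

lemma reverse_tail_mem_greenPaths {B : Set E} {a b : E} {l : List E}
    (hl : l ∈ greenPaths B a b) : (a :: l).reverse.tail ∈ greenPaths B b a := by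
  refine ⟨fun y hy => hl.1 y ?_, hl.2 ▸ getLastD_reverse_tail a l⟩
  rwa [← hl.2, cons_getLastD_reverse_tail, List.mem_reverse] at hy

lemma walkWeight_reverse {M : E → ℝ≥0∞} (hPQ : ∀ a b, M a * P a b = M b * Q b a) :
    ∀ (a : E) (l : List E), M a * walkWeight P a l =
      M (l.getLastD a) * walkWeight Q (l.getLastD a) (a :: l).reverse.tail
  | a, [] => by simp
  | a, b :: l => by
    have hrev : (a :: b :: l).reverse.tail = (b :: l).reverse.tail ++ [a] := by
      rw [List.reverse_cons, List.tail_append_of_ne_nil (by simp)]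
    rw [List.getLastD_cons, hrev, walkWeight_append, getLastD_reverse_tail, walkWeight_cons,
      ← mul_assoc, hPQ, mul_comm (M b), mul_assoc, walkWeight_reverse hPQ b l]
    simp only [walkWeight_cons, walkWeight_nil, mul_one]
    ring

lemma green_reverse {M : E → ℝ≥0∞} (hPQ : ∀ a b, M a * P a b = M b * Q b a) (B : Set E)
    (a b : E) : M a * green P B a b = M b * green Q B b a := by
  let e : greenPaths B a b ≃ greenPaths B b a :=
    { toFun l := ⟨_, reverse_tail_mem_greenPaths l.2⟩
      invFun l := ⟨_, reverse_tail_mem_greenPaths l.2⟩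
      left_inv l := Subtype.ext (reverse_tail_reverse_tail l.2.2)
      right_inv l := Subtype.ext (reverse_tail_reverse_tail l.2.2) }
  calc M a * green P B a b = ∑' l : greenPaths B a b, M b * walkWeight Q b (e l) := by
        rw [green, walkSum, ← ENNReal.tsum_mul_left]
        refine tsum_congr fun l => ?_
        rw [walkWeight_reverse hPQ, l.2.2]
        rfl
    _ = M b * green Q B b a := by
        rw [e.tsum_eq fun l => M b * walkWeight Q b l, ENNReal.tsum_mul_left]
        rfl

lemma mul_green_le_mul_green_self {M : E → ℝ≥0∞} (hQ : ∀ a, ∑' b, Q a b ≤ 1)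
    (hPQ : ∀ a b, M a * P a b = M b * Q b a) (B : Set E) {a : E} (ha : M a ≠ 0)
    (ha' : M a ≠ ⊤) (b : E) : M a * green P B a b ≤ M b * green P B a a := by
  have hdiag : green Q B a a = green P B a a :=
    ((ENNReal.mul_right_inj ha ha').1 (green_reverse hPQ B a a)).symm
  calc M a * green P B a b = M b * green Q B b a := green_reverse hPQ B a b
    _ ≤ M b * (walkSum Q b (firstEntrancePaths {a} b) * green Q B a a) :=
        mul_le_mul_right (green_le_walkSum_mul_green B b a) _
    _ ≤ M b * green P B a a := by
        rw [← hdiag]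
        exact mul_le_mul_right (mul_le_of_le_one_left' <|
          walkSum_le_one_of_isAntichain hQ b (isAntichain_firstEntrancePaths _ _)) _

def timeReversal (P : E → E → ℝ≥0∞) (M : E → ℝ≥0∞) (a b : E) : ℝ≥0∞ :=
  M b * P b a / M a

lemma mul_eq_mul_timeReversal {M : E → ℝ≥0∞} (hM : ∀ a, M a ≠ 0) (hM' : ∀ a, M a ≠ ⊤)
    (a b : E) : M a * P a b = M b * timeReversal P M b a :=
  (ENNReal.mul_div_cancel (hM b) (hM' b)).symm

lemma tsum_timeReversal_le_one {M : E → ℝ≥0∞} (hinv : ∀ a, ∑' b, M b * P b a ≤ M a) (a : E) :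
    ∑' b, timeReversal P M a b ≤ 1 := by
  simp only [timeReversal, div_eq_mul_inv, ENNReal.tsum_mul_right]
  exact ENNReal.div_le_of_le_mul ((hinv a).trans_eq (one_mul _).symm)

end Green

section Escape

variable {P : E → E → ℝ≥0∞} {B : Set E} {η : E}

lemma ne_nil_of_mem_escapePaths (hη : η ∉ B) {e : List E} (he : e ∈ escapePaths B η) :
    e ≠ [] := by
  rintro rfl
  exact hη he.2

lemma append_mem_firstEntrancePaths (hη : η ∉ B) {l e : List E} (hl : l ∈ greenPaths B η η)
    (he : e ∈ escapePaths B η) : l ++ e ∈ firstEntrancePaths B η := by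
  refine ⟨fun y hy => ?_, by rw [getLastD_append, hl.2]; exact he.2⟩
  rw [← List.cons_append, List.dropLast_append_of_ne_nil (ne_nil_of_mem_escapePaths hη he)]
    at hy
  rcases List.mem_append.1 hy with hy | hy
  · exact hl.1 y hy
  · exact fun hyB => he.1 y hy (Or.inr hyB)

lemma eq_nil_of_append_mem_escapePaths {l s e : List E} (hs : (l ++ s).getLastD η = η)
    (hse : s ++ e ∈ escapePaths B η) (he : e ≠ []) : s = [] := by
  by_contra hne
  rw [getLastD_append] at hs
  refine hse.1 η ?_ (Or.inl rfl)
  rw [List.dropLast_append_of_ne_nil he]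
  exact List.mem_append_left _ (hs ▸ getLastD_mem hne _)

lemma green_mul_walkSum_escapePaths_le_one (hP : ∀ a, ∑' b, P a b ≤ 1) (hη : η ∉ B) :
    green P B η η * walkSum P η (escapePaths B η) ≤ 1 := by
  let concat (x : greenPaths B η η × escapePaths B η) : firstEntrancePaths B η :=
    ⟨_, append_mem_firstEntrancePaths hη x.1.2 x.2.2⟩
  have hconcat : Injective concat := by
    rintro ⟨⟨l₁, hl₁⟩, ⟨e₁, he₁⟩⟩ ⟨⟨l₂, hl₂⟩, ⟨e₂, he₂⟩⟩ h
    have h : l₁ ++ e₁ = l₂ ++ e₂ := congrArg Subtype.val h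
    obtain ⟨s, rfl, rfl⟩ | ⟨s, rfl, rfl⟩ := List.append_eq_append_iff.1 h
    · obtain rfl := eq_nil_of_append_mem_escapePaths hl₂.2 he₁
        (ne_nil_of_mem_escapePaths hη he₂)
      simp
    · obtain rfl := eq_nil_of_append_mem_escapePaths hl₁.2 he₂
        (ne_nil_of_mem_escapePaths hη he₁)
      simp
  calc green P B η η * walkSum P η (escapePaths B η)
      = ∑' x : greenPaths B η η × escapePaths B η, walkWeight P η (concat x) := by
        rw [green, walkSum, walkSum, ← tsum_prod_mul]
        refine tsum_congr fun x => ?_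
        rw [walkWeight_append, x.1.2.2]
    _ ≤ walkSum P η (firstEntrancePaths B η) :=
        ENNReal.tsum_comp_le_tsum_of_injective hconcat fun m => walkWeight P η m
    _ ≤ 1 := walkSum_le_one_of_isAntichain hP η (isAntichain_firstEntrancePaths B η)

lemma walkSum_escapePaths_le_one (hP : ∀ a, ∑' b, P a b ≤ 1) (hη : η ∉ B) :
    walkSum P η (escapePaths B η) ≤ 1 :=
  (ENNReal.tsum_mono_subtype _ fun _ he =>
    append_mem_firstEntrancePaths (l := []) hη ⟨by simpa using hη, rfl⟩ he).trans
    (walkSum_le_one_of_isAntichain hP η (isAntichain_firstEntrancePaths B η))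

lemma exists_mem_escapePaths_walkWeight_ne_zero (hη : η ∉ B) :
    ∀ l : List E, walkWeight P η l ≠ 0 → l.getLastD η ∈ B →
      ∃ e ∈ escapePaths B η, walkWeight P η e ≠ 0
  | [], _, hl => absurd hl hη
  | b :: l, hw, hl => by
    rw [List.getLastD_cons] at hl
    obtain ⟨u, hu, v, rfl⟩ :=
      exists_mem_firstEntrancePaths_append (A := {η} ∪ B) (a := b) (Or.inr hl)
    rw [walkWeight_cons, walkWeight_append, mul_ne_zero_iff, mul_ne_zero_iff] at hw
    rcases hu.2 with hend | hend
    · rw [getLastD_append, Set.mem_singleton_iff.1 hend] at hl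
      rw [Set.mem_singleton_iff.1 hend] at hw
      have : v.length < (b :: (u ++ v)).length := by simp
      exact exists_mem_escapePaths_walkWeight_ne_zero hη v hw.2.2 hl
    · exact ⟨b :: u, ⟨hu.1, by rwa [List.getLastD_cons]⟩, mul_ne_zero hw.1 hw.2.1⟩
termination_by l => l.length

/-- In the notation of the paper, the left factor is `E_η[time spent in D before ℍ_B]` for
holding rates `Λ`, the right one is `Cap({η}, B)`, and the bound is `μ(D)` for `μ = M / Λ`. -/
lemma occupation_mul_capacity_le {M : E → ℝ≥0∞} (hP : ∀ a, ∑' b, P a b ≤ 1)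
    (hM : ∀ a, M a ≠ 0) (hM' : ∀ a, M a ≠ ⊤) (hinv : ∀ a, ∑' b, M b * P b a ≤ M a)
    (Λ : E → ℝ≥0∞) (D : Set E) (hη : η ∉ B) :
    (∑' ξ, D.indicator (fun ξ => (Λ ξ)⁻¹ * green P B η ξ) ξ) *
        (M η * walkSum P η (escapePaths B η)) ≤
      ∑' ξ, D.indicator (fun ξ => (Λ ξ)⁻¹ * M ξ) ξ := by
  have hgreen := mul_green_le_mul_green_self (tsum_timeReversal_le_one hinv)
    (mul_eq_mul_timeReversal hM hM') B (hM η) (hM' η)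
  have hpoint (ξ : E) : D.indicator (fun ξ => (Λ ξ)⁻¹ * green P B η ξ) ξ * M η ≤
      D.indicator (fun ξ => (Λ ξ)⁻¹ * M ξ) ξ * green P B η η := by
    by_cases hξ : ξ ∈ D
    · simp only [Set.indicator_of_mem hξ, mul_assoc, mul_comm (green P B η ξ)]
      exact mul_le_mul_right (hgreen ξ) _
    · simp [hξ]
  calc (∑' ξ, D.indicator (fun ξ => (Λ ξ)⁻¹ * green P B η ξ) ξ) *
        (M η * walkSum P η (escapePaths B η))
      = (∑' ξ, D.indicator (fun ξ => (Λ ξ)⁻¹ * green P B η ξ) ξ * M η) *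
          walkSum P η (escapePaths B η) := by rw [ENNReal.tsum_mul_right, mul_assoc]
    _ ≤ (∑' ξ, D.indicator (fun ξ => (Λ ξ)⁻¹ * M ξ) ξ * green P B η η) *
          walkSum P η (escapePaths B η) := mul_le_mul_left (ENNReal.tsum_le_tsum hpoint) _
    _ = (∑' ξ, D.indicator (fun ξ => (Λ ξ)⁻¹ * M ξ) ξ) *
          (green P B η η * walkSum P η (escapePaths B η)) := by
        rw [ENNReal.tsum_mul_right, mul_assoc]
    _ ≤ ∑' ξ, D.indicator (fun ξ => (Λ ξ)⁻¹ * M ξ) ξ :=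
        mul_le_of_le_one_right' (green_mul_walkSum_escapePaths_le_one hP hη)

end Escape

section Tuples

def tupleWalkEquiv : (Σ n, Fin (n + 1) → E) ≃ E × List E :=
  ({ toFun x := (x.2 0, ⟨x.1, Fin.tail x.2⟩)
     invFun y := ⟨y.2.1, Fin.cons y.1 y.2.2⟩
     left_inv := fun ⟨n, γ⟩ => by simp
     right_inv := fun ⟨a, n, γ⟩ => by simp } :
      (Σ n, Fin (n + 1) → E) ≃ E × Σ n, Fin n → E).trans
    (Equiv.prodCongr (Equiv.refl E) List.equivSigmaTuple.symm)

lemma tupleWalkEquiv_apply (x : Σ n, Fin (n + 1) → E) :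
    tupleWalkEquiv x = (x.2 0, List.ofFn (Fin.tail x.2)) := rfl

lemma cons_ofFn_tail {n : ℕ} (γ : Fin (n + 1) → E) :
    γ 0 :: List.ofFn (Fin.tail γ) = List.ofFn γ :=
  List.ofFn_succ.symm

lemma getLastD_ofFn_tail : ∀ {n : ℕ} (γ : Fin (n + 1) → E),
    (List.ofFn (Fin.tail γ)).getLastD (γ 0) = γ (Fin.last n)
  | 0, γ => rfl
  | n + 1, γ => by
    rw [List.ofFn_succ, List.getLastD_cons]
    exact getLastD_ofFn_tail (Fin.tail γ)

lemma forall_mem_dropLast_ofFn_tail {n : ℕ} (γ : Fin (n + 2) → E) (Q : E → Prop) :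
    (∀ y ∈ (List.ofFn (Fin.tail γ)).dropLast, Q y) ↔
      ∀ j : Fin (n + 2), 0 < (j : ℕ) → (j : ℕ) < n + 1 → Q (γ j) := by
  rw [List.ofFn_succ', List.concat_eq_append, List.dropLast_concat, List.forall_mem_ofFn_iff]
  constructor
  · intro h j hj0 hj
    obtain ⟨k, rfl⟩ : ∃ k : Fin n, j = k.castSucc.succ :=
      ⟨⟨j - 1, by omega⟩, Fin.ext (by simp; omega)⟩
    exact h k
  · exact fun h k => h _ (by simp) (by simp)

lemma exists_succ_eq_of_fst_ne_zero (x : Σ n, Fin (n + 1) → E) (hx : x.1 ≠ 0) :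
    ∃ y : Σ n, Fin (n + 2) → E, (⟨y.1 + 1, y.2⟩ : Σ n, Fin (n + 1) → E) = x := by
  obtain ⟨_ | n, γ⟩ := x
  · exact absurd rfl hx
  · exact ⟨⟨n, γ⟩, rfl⟩

variable {p : E → E → ℝ}

lemma ofReal_pathWeight (hp : ∀ a b, 0 ≤ p a b) : ∀ {n : ℕ} (γ : Fin (n + 1) → E),
    ENNReal.ofReal (pathWeight p γ) =
      walkWeight (fun a b => ENNReal.ofReal (p a b)) (γ 0) (List.ofFn (Fin.tail γ))
  | 0, γ => by simp [pathWeight]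
  | n + 1, γ => by
    rw [pathWeight, Fin.prod_univ_succ, ENNReal.ofReal_mul (hp _ _), List.ofFn_succ,
      walkWeight_cons]
    exact congrArg _ (ofReal_pathWeight hp (Fin.tail γ))

lemma occupationTime_eq (hp : ∀ a b, 0 ≤ p a b) {lam : E → ℝ} (hlam : ∀ a, 0 < lam a)
    (D B : Set E) (η : E) :
    occupationTime p lam D B η = ∑' ξ, D.indicator (fun ξ =>
      (ENNReal.ofReal (lam ξ))⁻¹ * green (fun a b => ENNReal.ofReal (p a b)) B η ξ) ξ := by
  set P : E → E → ℝ≥0∞ := fun a b => ENNReal.ofReal (p a b)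
  let g (l : List E) : ℝ≥0∞ :=
    if (∀ y ∈ η :: l, y ∉ B) ∧ l.getLastD η ∈ D then
      (ENNReal.ofReal (lam (l.getLastD η)))⁻¹ * walkWeight P η l else 0
  have hterm (x : Σ n, Fin (n + 1) → E) : ENNReal.ofReal
      ((if x.2 0 = η ∧ (∀ j, x.2 j ∉ B) ∧ x.2 (Fin.last x.1) ∈ D then pathWeight p x.2 else 0)
        / lam (x.2 (Fin.last x.1))) =
      if (tupleWalkEquiv x).1 = η then g (tupleWalkEquiv x).2 else 0 := by
    obtain ⟨n, γ⟩ := x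
    rw [tupleWalkEquiv_apply]
    by_cases h0 : γ 0 = η
    · subst h0
      simp only [g, if_true, true_and, cons_ofFn_tail, List.forall_mem_ofFn_iff,
        getLastD_ofFn_tail]
      split_ifs
      · rw [ENNReal.ofReal_div_of_pos (hlam _), ofReal_pathWeight hp, div_eq_mul_inv, mul_comm]
      · simp
    · simp [h0]
  have hg (l : List E) : g l = ∑' ξ, D.indicator (fun ξ =>
      (ENNReal.ofReal (lam ξ))⁻¹ * (greenPaths B η ξ).indicator (walkWeight P η) l) ξ := by
    rw [tsum_eq_single (l.getLastD η) fun ξ hξ => by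
      rw [Set.indicator_apply, Set.indicator_of_notMem fun h => hξ h.2.symm, mul_zero, ite_self]]
    simp only [g, Set.indicator_apply, greenPaths, Set.mem_ofPred_eq, and_true]
    split_ifs <;> simp_all
  calc occupationTime p lam D B η
      = ∑' x, if (tupleWalkEquiv x).1 = η then g (tupleWalkEquiv x).2 else 0 :=
        tsum_congr hterm
    _ = ∑' y : E × List E, if y.1 = η then g y.2 else 0 :=
        tupleWalkEquiv.tsum_eq fun y => if y.1 = η then g y.2 else 0
    _ = ∑' l, g l := by
        rw [ENNReal.tsum_prod', tsum_eq_single η fun a ha => by simp [ha]]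
        simp
    _ = ∑' ξ, ∑' l, D.indicator (fun ξ =>
          (ENNReal.ofReal (lam ξ))⁻¹ * (greenPaths B η ξ).indicator (walkWeight P η) l) ξ := by
        rw [tsum_congr hg, ENNReal.tsum_comm]
    _ = _ := by
        refine tsum_congr fun ξ => ?_
        by_cases hξ : ξ ∈ D
        · simp [hξ, ENNReal.tsum_mul_left, green, walkSum, tsum_subtype]
        · simp [hξ]

lemma retProb_eq_toReal (hp : ∀ a b, 0 ≤ p a b) {B : Set E} {η : E} (hη : η ∉ B) :
    retProb p η ({η} ∪ B) B =
      (walkSum (fun a b => ENNReal.ofReal (p a b)) η (escapePaths B η)).toReal := by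
  set P : E → E → ℝ≥0∞ := fun a b => ENNReal.ofReal (p a b)
  let f (y : E × List E) : ℝ≥0∞ :=
    if y.1 = η then (escapePaths B η).indicator (walkWeight P η) y.2 else 0
  let φ (x : Σ n, Fin (n + 2) → E) : E × List E := tupleWalkEquiv ⟨x.1 + 1, x.2⟩
  have hφ : Injective φ := tupleWalkEquiv.injective.comp fun ⟨n, γ⟩ ⟨m, δ⟩ h => by
    simp only [Sigma.mk.inj_iff, add_left_inj] at h
    exact Sigma.ext h.1 h.2
  have hsupp : support f ⊆ Set.range φ := by
    rintro ⟨a, l⟩ hy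
    have hl : l ∈ escapePaths B η := by
      by_contra hl
      simp [f, hl] at hy
    obtain ⟨x, hx⟩ := exists_succ_eq_of_fst_ne_zero (tupleWalkEquiv.symm (a, l))
      (by simpa [tupleWalkEquiv] using ne_nil_of_mem_escapePaths hη hl)
    exact ⟨x, by simp [φ, hx]⟩
  have hterm (x : Σ n, Fin (n + 2) → E) : ENNReal.ofReal
      (if x.2 0 = η ∧ (∀ j : Fin (x.1 + 2), 0 < (j : ℕ) → (j : ℕ) < x.1 + 1 →
          x.2 j ∉ ({η} ∪ B : Set E)) ∧ x.2 (Fin.last (x.1 + 1)) ∈ B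
        then pathWeight p x.2 else 0) = f (φ x) := by
    obtain ⟨n, γ⟩ := x
    simp only [φ, f, tupleWalkEquiv_apply]
    by_cases h0 : γ 0 = η
    · subst h0
      simp only [if_true, true_and, Set.indicator_apply, escapePaths, Set.mem_ofPred_eq,
        forall_mem_dropLast_ofFn_tail, getLastD_ofFn_tail]
      split_ifs
      · exact ofReal_pathWeight hp γ
      · simp
    · simp [h0]
  calc retProb p η ({η} ∪ B) B = ∑' x : Σ n, Fin (n + 2) → E, (f (φ x)).toReal := by
        refine tsum_congr fun x => ?_
        rw [← hterm, ENNReal.toReal_ofReal (by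
          split_ifs <;> [exact Finset.prod_nonneg fun i _ => hp _ _; exact le_rfl])]
        congr 1
    _ = (∑' y, f y).toReal := by
        rw [← ENNReal.tsum_toReal_eq fun x => (hterm x) ▸ ENNReal.ofReal_ne_top,
          hφ.tsum_eq hsupp]
    _ = _ := by
        rw [ENNReal.tsum_prod', tsum_eq_single η fun a ha => by simp [f, ha]]
        simp [f, walkSum, tsum_subtype]

lemma walkSum_escapePaths_pos (hp : ∀ a b, 0 ≤ p a b) (hirr : MCIrreducible p) {B : Set E}
    (hB : B.Nonempty) {η : E} (hη : η ∉ B) :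
    0 < walkSum (fun a b => ENNReal.ofReal (p a b)) η (escapePaths B η) := by
  obtain ⟨b, hb⟩ := hB
  obtain ⟨n, γ, rfl, hlast, hpos⟩ := hirr η b
  obtain ⟨e, he, hw⟩ := exists_mem_escapePaths_walkWeight_ne_zero hη (List.ofFn (Fin.tail γ))
    (by rw [← ofReal_pathWeight hp]; exact (ENNReal.ofReal_pos.2 hpos).ne')
    (by rwa [getLastD_ofFn_tail, hlast])
  exact (pos_iff_ne_zero.2 hw).trans_le (ENNReal.le_tsum (⟨e, he⟩ : escapePaths B (γ 0)))

lemma cap_singleton (M : E → ℝ) (B : Set E) (η : E) :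
    cap p M {η} B = M η * retProb p η ({η} ∪ B) B :=
  tsum_singleton η fun x => M x * retProb p x ({η} ∪ B) B

end Tuples

section RateMatrix

variable {R : E → E → ℝ} {μ : E → ℝ}

lemma jumpProb_eq_update (R : E → E → ℝ) (a : E) :
    jumpProb R a = update (fun b => R a b / -R a a) a 0 := by
  funext b
  by_cases h : a = b
  · subst h; simp [jumpProb]
  · simp [jumpProb, h, update_of_ne (Ne.symm h)]

lemma jumpProb_nonneg (hR : IsRateMatrix R) (a b : E) : 0 ≤ jumpProb R a b := by
  unfold jumpProb
  split_ifs with h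
  exacts [le_rfl, div_nonneg (hR.offdiag_nonneg a b h) (neg_nonneg.2 (hR.diag_neg a).le)]

lemma tsum_ofReal_update_zero {f : E → ℝ} {a : E} (hf : HasSum f 0) (hnn : ∀ b ≠ a, 0 ≤ f b) :
    ∑' b, ENNReal.ofReal (update f a 0 b) = ENNReal.ofReal (-f a) := by
  have h := hf.update a 0
  rw [← ENNReal.ofReal_tsum_of_nonneg _ h.summable, h.tsum_eq, zero_sub, add_zero]
  intro b
  by_cases hb : b = a
  · simp [hb]
  · rw [update_of_ne hb]; exact hnn b hb

lemma tsum_ofReal_jumpProb (hR : IsRateMatrix R) (a : E) :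
    ∑' b, ENNReal.ofReal (jumpProb R a b) = 1 := by
  have hsum : HasSum (fun b => R a b / -R a a) 0 := by
    simpa [hR.row_sum a] using (hR.row_summable a).hasSum.div_const (-R a a)
  rw [jumpProb_eq_update, tsum_ofReal_update_zero hsum fun b hb =>
    div_nonneg (hR.offdiag_nonneg a b (Ne.symm hb)) (neg_nonneg.2 (hR.diag_neg a).le),
    div_neg, neg_neg, div_self (hR.diag_neg a).ne, ENNReal.ofReal_one]

lemma tsum_ofReal_mul_jumpProb (hR : IsRateMatrix R) (hμ : IsRateStationary R μ) (a : E) :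
    ∑' b, ENNReal.ofReal (-R b b * μ b) * ENNReal.ofReal (jumpProb R b a) =
      ENNReal.ofReal (-R a a * μ a) := by
  have hM (b : E) : 0 ≤ -R b b * μ b :=
    mul_nonneg (neg_nonneg.2 (hR.diag_neg b).le) (hμ.pos b).le
  have hflux (b : E) :
      -R b b * μ b * jumpProb R b a = update (fun b => μ b * R b a) a 0 b := by
    by_cases h : b = a
    · subst h; simp [jumpProb]
    · rw [update_of_ne h, jumpProb, if_neg h]
      field_simp [(hR.diag_neg b).ne]
  simp_rw [← ENNReal.ofReal_mul (hM _), hflux]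
  rw [tsum_ofReal_update_zero ((hμ.flux_summable a).hasSum_iff.2 (hμ.stat a)) fun b _ =>
    mul_nonneg (hμ.pos b).le (hR.offdiag_nonneg b a ‹_›)]
  ring_nf

lemma tsum_indicator_inv_mul_ofReal (hR : IsRateMatrix R) (hμ : IsRateStationary R μ)
    (D : Set E) :
    ∑' ξ, D.indicator (fun ξ => (ENNReal.ofReal (-R ξ ξ))⁻¹ * ENNReal.ofReal (-R ξ ξ * μ ξ)) ξ =
      ENNReal.ofReal (∑' ξ : D, μ ξ) := by
  have h (ξ : E) : (ENNReal.ofReal (-R ξ ξ))⁻¹ * ENNReal.ofReal (-R ξ ξ * μ ξ) =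
      ENNReal.ofReal (μ ξ) := by
    have hlam : 0 < -R ξ ξ := neg_pos.2 (hR.diag_neg ξ)
    rw [ENNReal.ofReal_mul hlam.le, ← mul_assoc,
      ENNReal.inv_mul_cancel (ENNReal.ofReal_pos.2 hlam).ne' ENNReal.ofReal_ne_top, one_mul]
  simp_rw [h]
  rw [← tsum_subtype]
  exact (ENNReal.ofReal_tsum_of_nonneg (f := fun ξ : D => μ ξ) (fun ξ => (hμ.pos ξ).le)
    (hμ.summable.subtype D)).symm

end RateMatrix

end JumpChain

open JumpChain

theorem stmt2_general {E : Type*} (R : E → E → ℝ) (μ : E → ℝ)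
    (hR : IsRateMatrix R) (hirr : MCIrreducible (jumpProb R)) (hμ : IsRateStationary R μ)
    (B : Set E) (hB : B.Nonempty) (η : E) (hη : η ∉ B) (D : Set E) :
    occupationTime (jumpProb R) (fun ξ => -R ξ ξ) D B η
      ≤ ENNReal.ofReal
          ((∑' ξ : D, μ ξ.1) / cap (jumpProb R) (fun ξ => -R ξ ξ * μ ξ) {η} B) := by
  set P : E → E → ℝ≥0∞ := fun a b => ENNReal.ofReal (jumpProb R a b)
  have hp := jumpProb_nonneg hR
  have hlam (a : E) : 0 < -R a a := neg_pos.2 (hR.diag_neg a)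
  have hM (a : E) : 0 < -R a a * μ a := mul_pos (hlam a) (hμ.pos a)
  have hP (a : E) : ∑' b, P a b ≤ 1 := (tsum_ofReal_jumpProb hR a).le
  have hesc := walkSum_escapePaths_pos hp hirr hB hη
  have hcap : ENNReal.ofReal (cap (jumpProb R) (fun ξ => -R ξ ξ * μ ξ) {η} B) =
      ENNReal.ofReal (-R η η * μ η) * walkSum P η (escapePaths B η) := by
    rw [cap_singleton, retProb_eq_toReal hp hη, ENNReal.ofReal_mul (hM η).le,
      ENNReal.ofReal_toReal (ne_top_of_le_ne_top ENNReal.one_ne_top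
        (walkSum_escapePaths_le_one hP hη))]
  have hcap_pos : 0 < ENNReal.ofReal (cap (jumpProb R) (fun ξ => -R ξ ξ * μ ξ) {η} B) := by
    rw [hcap]
    exact ENNReal.mul_pos (ENNReal.ofReal_pos.2 (hM η)).ne' hesc.ne'
  rw [ENNReal.ofReal_div_of_pos (ENNReal.ofReal_pos.1 hcap_pos),
    ENNReal.le_div_iff_mul_le (Or.inl hcap_pos.ne') (Or.inl ENNReal.ofReal_ne_top), hcap,
    occupationTime_eq hp hlam, ← tsum_indicator_inv_mul_ofReal hR hμ D]
  exact occupation_mul_capacity_le hP (fun a => (ENNReal.ofReal_pos.2 (hM a)).ne')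
    (fun _ => ENNReal.ofReal_ne_top) (fun a => (tsum_ofReal_mul_jumpProb hR hμ a).le) _ D hη

/-- Estimate (6.2): for a nonempty `B ⊆ E`, `η ∉ B` and any `D ⊆ E`, the expected time the
continuous-time chain started at `η` spends in `D` before hitting `B` is at most
`μ(D)/Cap({η},B)`. -/
theorem stmt2 {E : Type*} [Countable E] (R : E → E → ℝ) (μ : E → ℝ)
    (hR : IsRateMatrix R) (hirr : MCIrreducible (jumpProb R)) (hμ : IsRateStationary R μ)
    (B : Set E) (hB : B.Nonempty) (η : E) (hη : η ∉ B) (D : Set E) :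
    occupationTime (jumpProb R) (fun ξ => -R ξ ξ) D B η
      ≤ ENNReal.ofReal
          ((∑' ξ : D, μ ξ.1) / cap (jumpProb R) (fun ξ => -R ξ ξ * μ ξ) {η} B) :=
  stmt2_general R μ hR hirr hμ B hB η hη D
end
end

section
/- Assume (H0): there are positive reals θ_N and, for every x ≠ y in S = {1,…,κ}, the limit r(x,y) := lim_{N→∞} θ_N r_N(ℰ^x_N, ℰ^y_N) exists; assume (H1): for each x ∈ S there are points ξ^N_x ∈ ℰ^x_N with lim_{N→∞} Cap_N(ℰ^x_N, Ĕ^x_N)/(inf_{η∈ℰ^x_N, η≠ξ^N_x} Cap_N({η},{ξ^N_x})) = 0; assume μ_N(ℰ^x_N) → m(x) with m(x) > 0 for every x ∈ S, and that Σ_{y≠x} r(x,y) > 0 for every x ∈ S. Then m is a stationary measure for the rates r: for every x ∈ S, Σ_{y≠x} m(y) r(y,x) = m(x) Σ_{y≠x} r(x,y). -/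
open scoped Classical
open Filter Topology

noncomputable section

/-- `μ` is a stationary probability measure for the rate matrix `R`, charging every point,
with summable holding rates:  `Σ_η λ(η) μ(η) < ∞`. -/
structure IsStationaryRate {E : Type*} (R : E → E → ℝ) (μ : E → ℝ) : Prop where
  pos : ∀ η, 0 < μ η
  summable : Summable μ
  total : ∑' η, μ η = 1
  flux_summable : ∀ ξ, Summable fun η => μ η * R η ξ
  stat : ∀ ξ, ∑' η, μ η * R η ξ = 0
  lam_summable : Summable fun η => -R η η * μ η

/-- The mean jump rate `r_N(A, T) = μ(A)^{-1} Σ_{η∈A} λ(η)μ(η) P_η[ℍ⁺_{ES} < ∞ and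
Y_{ℍ⁺_{ES}} ∈ T]` of the trace process on `ES` from `A ⊆ ES` to `T ⊆ ES`. -/
def meanRate {E : Type*} (R : E → E → ℝ) (μ : E → ℝ) (A ES T : Set E) : ℝ :=
  (∑' η : A, μ η.1)⁻¹ * ∑' η : A, -R η.1 η.1 * μ η.1 * retProb (jumpProb R) η.1 ES T

/-!
Write `M = λμ`, `ℰ = ⋃ₓ ℰˣ` and `F(x,y) = Σ_{η∈ℰˣ} M(η) P_η[Y_{ℍ⁺_ℰ} ∈ ℰʸ]`, so that
`F(x,y) = μ(ℰˣ) r_N(ℰˣ,ℰʸ)`. For each `N` we show `Σ_y F(x,y) = M(ℰˣ) = Σ_y F(y,x)`.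

The first identity is recurrence of `ℰ`. With `s_n(η) = P_η[Y_1, …, Y_n ∉ ℰ]`, invariance of `M`
gives `Σ_η M s_n = Σ_{η∈ℰ} M s_n + Σ_η M s_{n+1}`, so `Σ_n Σ_{η∈ℰ} M s_n ≤ M(E) < ∞` and
`s_n → 0` on `ℰ`: the chain started in `ℰ` returns to `ℰ` almost surely.

The second identity is the first one for the chain reversed with respect to `M`: reversing a path
exchanges its endpoints and preserves its `M`-weight, which in operator form says that the
killed transition operator and its reversal are adjoint for `⟪f, g⟫ = Σ M f g`.

Thus `Σ_{y≠x} F(y,x) = Σ_{y≠x} F(x,y)`; multiplying by `θ_N` and letting `N → ∞` gives the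
balance equation for `m` and `r`.
-/

namespace DiscreteChain

open scoped ENNReal

variable {E : Type*}

def weight (q : E → E → ℝ≥0∞) {n : ℕ} (γ : Fin (n + 1) → E) : ℝ≥0∞ :=
  ∏ i : Fin n, q (γ i.castSucc) (γ i.succ)

def step (q : E → E → ℝ≥0∞) (h : E → ℝ≥0∞) (η : E) : ℝ≥0∞ :=
  ∑' ξ, q η ξ * h ξ

def killedStep (q : E → E → ℝ≥0∞) (S : Set E) (h : E → ℝ≥0∞) : E → ℝ≥0∞ :=
  step q (Sᶜ.indicator h)

/-- `firstEntryAt q S g n η = E_η[g(Y_{n+1}); Y_1, …, Y_n ∉ S]`; for `g = T.indicator 1` with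
`T ⊆ S` this is `P_η[ℍ⁺_S = n + 1, Y_{ℍ⁺_S} ∈ T]`. -/
def firstEntryAt (q : E → E → ℝ≥0∞) (S : Set E) (g : E → ℝ≥0∞) (n : ℕ) : E → ℝ≥0∞ :=
  (killedStep q S)^[n] (step q g)

def firstEntry (q : E → E → ℝ≥0∞) (S : Set E) (g : E → ℝ≥0∞) (η : E) : ℝ≥0∞ :=
  ∑' n, firstEntryAt q S g n η

def survival (q : E → E → ℝ≥0∞) (S : Set E) (n : ℕ) : E → ℝ≥0∞ :=
  (killedStep q S)^[n] 1

def reverse (q : E → E → ℝ≥0∞) (M : E → ℝ≥0∞) (η ξ : E) : ℝ≥0∞ :=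
  M ξ * q ξ η / M η

def pairing (M f g : E → ℝ≥0∞) : ℝ≥0∞ :=
  ∑' η, M η * (f η * g η)

structure IsStationary (q : E → E → ℝ≥0∞) (M : E → ℝ≥0∞) : Prop where
  tsum_kernel : ∀ η, ∑' ξ, q η ξ = 1
  tsum_mul_kernel : ∀ ξ, ∑' η, M η * q η ξ = M ξ
  ne_zero : ∀ η, M η ≠ 0
  tsum_ne_top : ∑' η, M η ≠ ⊤

section Paths

variable (q : E → E → ℝ≥0∞)

lemma weight_cons {n : ℕ} (a : E) (τ : Fin (n + 1) → E) :
    weight q (Fin.cons a τ : Fin (n + 2) → E) = q a (τ 0) * weight q τ := by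
  simp [weight, Fin.prod_univ_succ]

lemma tsum_ite_head_eq_tsum_cons {n : ℕ} (η : E) (F : (Fin (n + 2) → E) → ℝ≥0∞) :
    ∑' γ : Fin (n + 2) → E, (if γ 0 = η then F γ else 0)
      = ∑' τ : Fin (n + 1) → E, F (Fin.cons η τ) := by
  rw [← (Fin.consEquiv fun _ => E).tsum_eq, ENNReal.tsum_prod', tsum_eq_single η]
  · simp [Fin.consEquiv]
  · intro a ha
    simp [Fin.consEquiv, ha]

lemma tsum_tail_eq_firstEntryAt (S T : Set E) (n : ℕ) (η : E) :
    ∑' τ : Fin (n + 1) → E,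
        (if (∀ i : Fin (n + 1), (i : ℕ) < n → τ i ∉ S) ∧ τ (Fin.last n) ∈ T
          then weight q (Fin.cons η τ : Fin (n + 2) → E) else 0)
      = firstEntryAt q S (T.indicator 1) n η := by
  induction n generalizing η with
  | zero =>
    rw [← (Equiv.funUnique (Fin 1) E).symm.tsum_eq]
    simp [firstEntryAt, step, weight, Set.indicator_apply]
  | succ n ih =>
    rw [← (Fin.consEquiv fun _ => E).tsum_eq, ENNReal.tsum_prod', firstEntryAt,
      Function.iterate_succ_apply', ← firstEntryAt, killedStep, step]
    refine tsum_congr fun ζ => ?_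
    rw [Set.indicator_apply, ← ih]
    split_ifs with hζ
    · rw [← ENNReal.tsum_mul_left]
      refine tsum_congr fun τ => ?_
      simp only [Set.mem_compl_iff] at hζ
      simp [Fin.consEquiv, Fin.forall_fin_succ, weight_cons, hζ]
    · simp only [Set.mem_compl_iff, not_not] at hζ
      simp [Fin.consEquiv, Fin.forall_fin_succ, hζ]

lemma retProb_eq_toReal {p : E → E → ℝ} (hp : ∀ η ξ, 0 ≤ p η ξ) (η : E) (S T : Set E) :
    retProb p η S T
      = (firstEntry (fun η ξ => ENNReal.ofReal (p η ξ)) S (T.indicator 1) η).toReal := by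
  have hweight : ∀ {n : ℕ} (γ : Fin (n + 1) → E),
      ENNReal.ofReal (pathWeight p γ) = weight (fun η ξ => ENNReal.ofReal (p η ξ)) γ :=
    fun γ => ENNReal.ofReal_prod_of_nonneg fun _ _ => hp _ _
  have hpath : ∀ {n : ℕ} (γ : Fin (n + 1) → E), 0 ≤ pathWeight p γ :=
    fun _ => Finset.prod_nonneg fun _ _ => hp _ _
  calc retProb p η S T
      = ∑' x : Σ n : ℕ, Fin (n + 2) → E, (if x.2 0 = η ∧
          (∀ j : Fin (x.1 + 2), 0 < (j : ℕ) → (j : ℕ) < x.1 + 1 → x.2 j ∉ S) ∧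
            x.2 (Fin.last (x.1 + 1)) ∈ T
          then ENNReal.ofReal (pathWeight p x.2) else 0).toReal := by
        refine tsum_congr fun x => ?_
        split_ifs
        exacts [(ENNReal.toReal_ofReal (hpath _)).symm, rfl]
    _ = _ := by
      rw [← ENNReal.tsum_toReal_eq fun x => by split_ifs <;> simp, ENNReal.tsum_sigma', firstEntry]
      congr 1
      refine tsum_congr fun n => ?_
      simp_rw [ite_and, hweight]
      rw [tsum_ite_head_eq_tsum_cons, ← tsum_tail_eq_firstEntryAt]
      refine tsum_congr fun τ => ?_
      simp [Fin.forall_fin_succ, ite_and]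

end Paths

section Pairing

lemma pairing_comm (M f g : E → ℝ≥0∞) : pairing M f g = pairing M g f := by
  simp only [pairing, mul_comm (f _)]

lemma pairing_indicator_left (M f g : E → ℝ≥0∞) (S : Set E) :
    pairing M (S.indicator f) g = pairing M f (S.indicator g) := by
  refine tsum_congr fun η => ?_
  rw [← Set.indicator_mul_left, Set.indicator_mul_right]

lemma pairing_sum {ι : Type*} (s : Finset ι) (M f : E → ℝ≥0∞) (g : ι → E → ℝ≥0∞) :
    pairing M f (∑ i ∈ s, g i) = ∑ i ∈ s, pairing M f (g i) := by
  simp only [pairing, Finset.sum_apply, Finset.mul_sum]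
  exact Summable.tsum_finsetSum fun _ _ => ENNReal.summable

lemma pairing_tsum (M f : E → ℝ≥0∞) (g : ℕ → E → ℝ≥0∞) :
    pairing M f (fun η => ∑' n, g n η) = ∑' n, pairing M f (g n) := by
  simp only [pairing, ← ENNReal.tsum_mul_left]
  exact ENNReal.tsum_comm

variable {q : E → E → ℝ≥0∞} {M : E → ℝ≥0∞}

lemma mul_reverse {η : E} (h0 : M η ≠ 0) (htop : M η ≠ ⊤) (ξ : E) :
    M η * reverse q M η ξ = M ξ * q ξ η :=
  ENNReal.mul_div_cancel h0 htop

variable (h0 : ∀ η, M η ≠ 0) (htop : ∀ η, M η ≠ ⊤)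
include h0 htop

lemma pairing_step (f g : E → ℝ≥0∞) :
    pairing M f (step q g) = pairing M (step (reverse q M) f) g := by
  calc pairing M f (step q g) = ∑' η, ∑' ξ, M η * q η ξ * f η * g ξ := by
        simp only [pairing, step, ← ENNReal.tsum_mul_left]
        exact tsum_congr fun η => tsum_congr fun ξ => by ring
    _ = ∑' ξ, ∑' η, M ξ * reverse q M ξ η * f η * g ξ := by
        rw [ENNReal.tsum_comm]
        simp only [mul_reverse (h0 _) (htop _)]
    _ = pairing M (step (reverse q M) f) g := by
        simp only [pairing, step, ← ENNReal.tsum_mul_left, ← ENNReal.tsum_mul_right]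
        exact tsum_congr fun ξ => tsum_congr fun η => by ring

lemma pairing_iterate_killedStep (S : Set E) (n : ℕ) (f g : E → ℝ≥0∞) :
    pairing M f ((killedStep q S)^[n] g)
      = pairing M ((fun f => Sᶜ.indicator (step (reverse q M) f))^[n] f) g := by
  induction n generalizing f with
  | zero => rfl
  | succ n ih =>
    rw [Function.iterate_succ_apply', killedStep, pairing_step h0 htop, ← pairing_indicator_left,
      ih, Function.iterate_succ_apply]

lemma pairing_firstEntryAt (S : Set E) (f g : E → ℝ≥0∞) (n : ℕ) :
    pairing M f (firstEntryAt q S g n) = pairing M (firstEntryAt (reverse q M) S f n) g := by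
  have hsemi : Function.Semiconj (step (reverse q M))
      (fun f => Sᶜ.indicator (step (reverse q M) f)) (killedStep (reverse q M) S) := fun _ => rfl
  rw [firstEntryAt, pairing_iterate_killedStep h0 htop, pairing_step h0 htop, firstEntryAt,
    (hsemi.iterate_right n).eq]

lemma pairing_firstEntry (S : Set E) (f g : E → ℝ≥0∞) :
    pairing M f (firstEntry q S g) = pairing M (firstEntry (reverse q M) S f) g := by
  unfold firstEntry
  rw [pairing_tsum, pairing_comm _ _ g, pairing_tsum]
  exact tsum_congr fun n => by rw [pairing_firstEntryAt h0 htop, pairing_comm]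

end Pairing

lemma IsStationary.ne_top {q : E → E → ℝ≥0∞} {M : E → ℝ≥0∞} (hM : IsStationary q M) (η : E) :
    M η ≠ ⊤ :=
  ENNReal.ne_top_of_tsum_ne_top hM.tsum_ne_top η

lemma IsStationary.reverse {q : E → E → ℝ≥0∞} {M : E → ℝ≥0∞} (hM : IsStationary q M) :
    IsStationary (reverse q M) M where
  tsum_kernel η := by
    simp only [DiscreteChain.reverse, ENNReal.div_eq_inv_mul, ENNReal.tsum_mul_left,
      hM.tsum_mul_kernel, ENNReal.inv_mul_cancel (hM.ne_zero η) (hM.ne_top η)]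
  tsum_mul_kernel ξ := by
    simp only [mul_reverse (hM.ne_zero _) (hM.ne_top _), ENNReal.tsum_mul_left, hM.tsum_kernel,
      mul_one]
  ne_zero := hM.ne_zero
  tsum_ne_top := hM.tsum_ne_top

section Recurrence

variable {q : E → E → ℝ≥0∞} {M : E → ℝ≥0∞}

lemma step_add (f g : E → ℝ≥0∞) :
    step q (f + g) = step q f + step q g := by
  ext η
  simp only [step, Pi.add_apply, mul_add, ENNReal.tsum_add]

lemma step_one (hq : ∀ η, ∑' ξ, q η ξ = 1) : step q 1 = 1 := by
  ext η
  simp [step, hq]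

lemma iterate_killedStep_add (S : Set E) (n : ℕ) (f g : E → ℝ≥0∞) :
    (killedStep q S)^[n] (f + g) = (killedStep q S)^[n] f + (killedStep q S)^[n] g := by
  induction n generalizing f g with
  | zero => rfl
  | succ n ih =>
    simp only [Function.iterate_succ_apply, killedStep, Set.indicator_add', step_add, ih]

lemma firstEntryAt_add_survival_succ (hq : ∀ η, ∑' ξ, q η ξ = 1) (S : Set E) (n : ℕ) :
    firstEntryAt q S (S.indicator 1) n + survival q S (n + 1) = survival q S n := by
  rw [survival, Function.iterate_succ_apply, firstEntryAt, ← iterate_killedStep_add, killedStep,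
    ← step_add, Set.indicator_self_add_compl, step_one hq, survival]

lemma sum_range_firstEntryAt_add_survival (hq : ∀ η, ∑' ξ, q η ξ = 1) (S : Set E) (N : ℕ) :
    ∑ k ∈ Finset.range N, firstEntryAt q S (S.indicator 1) k + survival q S N = 1 := by
  induction N with
  | zero => simp [survival]
  | succ N ih =>
    rw [Finset.sum_range_succ, add_assoc, firstEntryAt_add_survival_succ hq, ih]

lemma tsum_mul_step (hM : ∀ ξ, ∑' η, M η * q η ξ = M ξ) (h : E → ℝ≥0∞) :
    ∑' η, M η * step q h η = ∑' ξ, M ξ * h ξ := by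
  simp only [step, ← ENNReal.tsum_mul_left]
  rw [ENNReal.tsum_comm]
  refine tsum_congr fun ξ => ?_
  rw [← hM ξ, ← ENNReal.tsum_mul_right]
  exact tsum_congr fun η => by ring

lemma tsum_indicator_mul_survival_add (hM : ∀ ξ, ∑' η, M η * q η ξ = M ξ) (S : Set E)
    (n : ℕ) :
    ∑' η, S.indicator (fun η => M η * survival q S n η) η
        + ∑' η, M η * survival q S (n + 1) η
      = ∑' η, M η * survival q S n η := by
  rw [show survival q S (n + 1) = killedStep q S (survival q S n) from
      Function.iterate_succ_apply' _ _ _, killedStep, tsum_mul_step hM,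
    ← ENNReal.tsum_add]
  refine tsum_congr fun η => ?_
  rw [← Set.indicator_mul_right, Set.indicator_self_add_compl_apply]

lemma tsum_tsum_indicator_mul_survival_le (hM : ∀ ξ, ∑' η, M η * q η ξ = M ξ) (S : Set E) :
    ∑' n, ∑' η, S.indicator (fun η => M η * survival q S n η) η ≤ ∑' η, M η := by
  refine ENNReal.tsum_le_of_sum_range_le fun N => ?_
  have hsum : ∀ N, ∑ n ∈ Finset.range N, ∑' η, S.indicator (fun η => M η * survival q S n η) η
      + ∑' η, M η * survival q S N η = ∑' η, M η := by
    intro N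
    induction N with
    | zero => simp [survival]
    | succ N ih => rw [Finset.sum_range_succ, add_assoc, tsum_indicator_mul_survival_add hM, ih]
  exact (hsum N).le.trans' le_self_add

lemma tendsto_survival (hM : IsStationary q M) {S : Set E} {ζ : E} (hζ : ζ ∈ S) :
    Tendsto (fun n => survival q S n ζ) atTop (𝓝 0) := by
  have hmass := ENNReal.tendsto_atTop_zero_of_tsum_ne_top
    (ne_top_of_le_ne_top hM.tsum_ne_top (tsum_tsum_indicator_mul_survival_le hM.tsum_mul_kernel S))
  have hζmass : Tendsto (fun n => M ζ * survival q S n ζ) atTop (𝓝 0) :=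
    tendsto_of_tendsto_of_tendsto_of_le_of_le tendsto_const_nhds hmass (fun _ => zero_le)
      fun n => by simpa [Set.indicator_of_mem hζ] using
        ENNReal.le_tsum (f := fun η => S.indicator (fun η => M η * survival q S n η) η) ζ
  simpa [← mul_assoc, ENNReal.inv_mul_cancel (hM.ne_zero ζ) (hM.ne_top ζ)] using
    ENNReal.Tendsto.const_mul hζmass (Or.inr (ENNReal.inv_ne_top.2 (hM.ne_zero ζ)))

lemma firstEntry_indicator_self (hM : IsStationary q M) {S : Set E} {ζ : E} (hζ : ζ ∈ S) :
    firstEntry q S (S.indicator 1) ζ = 1 := by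
  have hlim := (ENNReal.tendsto_nat_tsum fun k => firstEntryAt q S (S.indicator 1) k ζ).add
    (tendsto_survival hM hζ)
  have hone : ∀ N, ∑ k ∈ Finset.range N, firstEntryAt q S (S.indicator 1) k ζ
      + survival q S N ζ = 1 := fun N => by
    simpa using congrFun (sum_range_firstEntryAt_add_survival hM.tsum_kernel S N) ζ
  simp only [hone, add_zero] at hlim
  exact tendsto_nhds_unique hlim tendsto_const_nhds

end Recurrence

section Balance

variable {q : E → E → ℝ≥0∞} {M : E → ℝ≥0∞} {κ : ℕ} {ℰ : Fin κ → Set E}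

lemma sum_indicator_one_of_pairwise_disjoint (hdis : Pairwise fun x y => Disjoint (ℰ x) (ℰ y)) :
    ∑ x, (ℰ x).indicator (1 : E → ℝ≥0∞) = (⋃ x, ℰ x).indicator 1 := by
  ext η
  rw [Finset.sum_apply, ← Finset.indicator_biUnion_apply _ _ (hdis.set_pairwise _)]
  simp

lemma pairing_indicator_firstEntry_self (hM : IsStationary q M) {A S : Set E} (hA : A ⊆ S) :
    pairing M (A.indicator 1) (firstEntry q S (S.indicator 1)) = ∑' η, A.indicator M η := by
  refine tsum_congr fun η => ?_
  by_cases h : η ∈ A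
  · simp [h, firstEntry_indicator_self hM (hA h)]
  · simp [h]

theorem sum_pairing_firstEntry_into (hM : IsStationary q M)
    (hdis : Pairwise fun x y => Disjoint (ℰ x) (ℰ y)) (y : Fin κ) :
    ∑ x, pairing M ((ℰ x).indicator 1) (firstEntry q (⋃ z, ℰ z) ((ℰ y).indicator 1))
      = ∑' η, (ℰ y).indicator M η := by
  simp_rw [pairing_comm M ((ℰ _).indicator 1)]
  rw [← pairing_sum, sum_indicator_one_of_pairwise_disjoint hdis, pairing_comm,
    pairing_firstEntry hM.ne_zero hM.ne_top, pairing_comm,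
    pairing_indicator_firstEntry_self hM.reverse (Set.subset_iUnion ℰ y)]

theorem sum_pairing_firstEntry_from (hM : IsStationary q M)
    (hdis : Pairwise fun x y => Disjoint (ℰ x) (ℰ y)) (y : Fin κ) :
    ∑ x, pairing M ((ℰ y).indicator 1) (firstEntry q (⋃ z, ℰ z) ((ℰ x).indicator 1))
      = ∑' η, (ℰ y).indicator M η := by
  simp_rw [pairing_firstEntry hM.ne_zero hM.ne_top]
  rw [← pairing_sum, sum_indicator_one_of_pairwise_disjoint hdis,
    ← pairing_firstEntry hM.ne_zero hM.ne_top,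
    pairing_indicator_firstEntry_self hM (Set.subset_iUnion ℰ y)]

end Balance

end DiscreteChain

section RateMatrix

open DiscreteChain
open scoped ENNReal

variable {E : Type*} {R : E → E → ℝ} {μ : E → ℝ}

def jumpKernel (R : E → E → ℝ) (η ξ : E) : ℝ≥0∞ :=
  ENNReal.ofReal (jumpProb R η ξ)

def jumpMeasure (R : E → E → ℝ) (μ : E → ℝ) (η : E) : ℝ≥0∞ :=
  ENNReal.ofReal (-R η η * μ η)

def traceFlow (R : E → E → ℝ) (μ : E → ℝ) (A S T : Set E) : ℝ :=
  ∑' η : A, -R η.1 η.1 * μ η.1 * retProb (jumpProb R) η.1 S T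

lemma IsRateMatrix.holdingRate_pos (hR : IsRateMatrix R) (η : E) : 0 < -R η η :=
  neg_pos.2 (hR.diag_neg η)

lemma holdingRate_mul_pos (hR : IsRateMatrix R) (hμ : IsStationaryRate R μ) (η : E) :
    0 < -R η η * μ η :=
  mul_pos (hR.holdingRate_pos η) (hμ.pos η)

lemma jumpProb_nonneg (hR : IsRateMatrix R) (η ξ : E) : 0 ≤ jumpProb R η ξ := by
  unfold jumpProb
  split_ifs with h
  · rfl
  · exact div_nonneg (hR.offdiag_nonneg η ξ h) (hR.holdingRate_pos η).le

lemma hasSum_jumpProb (hR : IsRateMatrix R) (η : E) : HasSum (jumpProb R η) 1 := by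
  have h := (((hR.row_summable η).hasSum_iff.2 (hR.row_sum η)).add
    (hasSum_pi_single η (-R η η))).div_const (-R η η)
  rw [zero_add, div_self (hR.holdingRate_pos η).ne'] at h
  have hfun : jumpProb R η = fun ξ => (R η ξ + (Pi.single η (-R η η) : E → ℝ) ξ) / -R η η := by
    ext ξ
    rcases eq_or_ne η ξ with rfl | hne
    · simp [jumpProb]
    · simp [jumpProb, hne, hne.symm]
  rwa [hfun]

lemma hasSum_mul_jumpProb (hR : IsRateMatrix R) (hμ : IsStationaryRate R μ) (ξ : E) :
    HasSum (fun η => -R η η * μ η * jumpProb R η ξ) (-R ξ ξ * μ ξ) := by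
  have h := ((hμ.flux_summable ξ).hasSum_iff.2 (hμ.stat ξ)).add
    (hasSum_pi_single ξ (-R ξ ξ * μ ξ))
  rw [zero_add] at h
  convert h using 2 with η
  rcases eq_or_ne η ξ with rfl | hne
  · simp [jumpProb]
    ring
  · have hlam := (hR.diag_neg η).ne
    simp [jumpProb, hne]
    field_simp

lemma isStationary_jumpKernel (hR : IsRateMatrix R) (hμ : IsStationaryRate R μ) :
    IsStationary (jumpKernel R) (jumpMeasure R μ) where
  tsum_kernel η := by
    simp only [jumpKernel]
    rw [← ENNReal.ofReal_tsum_of_nonneg (jumpProb_nonneg hR η) (hasSum_jumpProb hR η).summable,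
      (hasSum_jumpProb hR η).tsum_eq, ENNReal.ofReal_one]
  tsum_mul_kernel ξ := by
    simp only [jumpMeasure, jumpKernel,
      ← ENNReal.ofReal_mul (holdingRate_mul_pos hR hμ _).le]
    rw [← ENNReal.ofReal_tsum_of_nonneg
      (fun η => mul_nonneg (holdingRate_mul_pos hR hμ η).le (jumpProb_nonneg hR η ξ))
      (hasSum_mul_jumpProb hR hμ ξ).summable, (hasSum_mul_jumpProb hR hμ ξ).tsum_eq]
  ne_zero η := by
    simpa [jumpMeasure] using holdingRate_mul_pos hR hμ η
  tsum_ne_top := by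
    simp only [jumpMeasure]
    rw [← ENNReal.ofReal_tsum_of_nonneg
      (fun η => (holdingRate_mul_pos hR hμ η).le) hμ.lam_summable]
    exact ENNReal.ofReal_ne_top

lemma traceFlow_eq_toReal (hR : IsRateMatrix R) (hμ : IsStationaryRate R μ) {A S T : Set E}
    (hfin : pairing (jumpMeasure R μ) (A.indicator 1)
      (firstEntry (jumpKernel R) S (T.indicator 1)) ≠ ⊤) :
    traceFlow R μ A S T = (pairing (jumpMeasure R μ) (A.indicator 1)
      (firstEntry (jumpKernel R) S (T.indicator 1))).toReal := by
  rw [pairing, ENNReal.tsum_toReal_eq (ENNReal.ne_top_of_tsum_ne_top hfin), traceFlow,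
    tsum_subtype A fun η => -R η η * μ η * retProb (jumpProb R) η S T]
  refine tsum_congr fun η => ?_
  by_cases h : η ∈ A
  · simp only [Set.indicator_of_mem h, Pi.one_apply, one_mul]
    rw [ENNReal.toReal_mul, jumpMeasure,
      ENNReal.toReal_ofReal (holdingRate_mul_pos hR hμ η).le,
      retProb_eq_toReal (jumpProb_nonneg hR)]
    rfl
  · simp [h]

theorem traceFlow_balance (hR : IsRateMatrix R) (hμ : IsStationaryRate R μ) {κ : ℕ}
    {ℰ : Fin κ → Set E} (hdis : Pairwise fun x y => Disjoint (ℰ x) (ℰ y)) (y : Fin κ) :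
    ∑ x ∈ Finset.univ.erase y, traceFlow R μ (ℰ x) (⋃ z, ℰ z) (ℰ y)
      = ∑ x ∈ Finset.univ.erase y, traceFlow R μ (ℰ y) (⋃ z, ℰ z) (ℰ x) := by
  have hM := isStationary_jumpKernel hR hμ
  set F : Fin κ → Fin κ → ℝ≥0∞ := fun x y => pairing (jumpMeasure R μ) ((ℰ x).indicator 1)
    (firstEntry (jumpKernel R) (⋃ z, ℰ z) ((ℰ y).indicator 1))
  have hinto : ∑ x, F x y = ∑' η, (ℰ y).indicator (jumpMeasure R μ) η :=
    sum_pairing_firstEntry_into hM hdis y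
  have hfrom : ∑ x, F y x = ∑' η, (ℰ y).indicator (jumpMeasure R μ) η :=
    sum_pairing_firstEntry_from hM hdis y
  have hmass : ∑' η, (ℰ y).indicator (jumpMeasure R μ) η ≠ ⊤ :=
    ne_top_of_le_ne_top hM.tsum_ne_top (ENNReal.tsum_le_tsum fun η => Set.indicator_le_self _ _ _)
  have hfin_into : ∀ x, F x y ≠ ⊤ := fun x => ne_top_of_le_ne_top (hinto ▸ hmass)
    (Finset.single_le_sum (f := fun x => F x y) (fun _ _ => zero_le) (Finset.mem_univ x))
  have hfin_from : ∀ x, F y x ≠ ⊤ := fun x => ne_top_of_le_ne_top (hfrom ▸ hmass)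
    (Finset.single_le_sum (f := F y) (fun _ _ => zero_le) (Finset.mem_univ x))
  have hsum : ∑ x, traceFlow R μ (ℰ x) (⋃ z, ℰ z) (ℰ y)
      = ∑ x, traceFlow R μ (ℰ y) (⋃ z, ℰ z) (ℰ x) := by
    rw [Finset.sum_congr rfl fun x _ => traceFlow_eq_toReal hR hμ (hfin_into x),
      Finset.sum_congr rfl fun x _ => traceFlow_eq_toReal hR hμ (hfin_from x),
      ← ENNReal.toReal_sum fun x _ => hfin_into x, ← ENNReal.toReal_sum fun x _ => hfin_from x,
      hinto, hfrom]
  rw [← Finset.add_sum_erase _ _ (Finset.mem_univ y),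
    ← Finset.add_sum_erase _ _ (Finset.mem_univ y)] at hsum
  exact add_left_cancel hsum

lemma tsum_mul_meanRate (hμ : IsStationaryRate R μ) (A S T : Set E) :
    (∑' η : A, μ η) * meanRate R μ A S T = traceFlow R μ A S T := by
  rcases A.eq_empty_or_nonempty with rfl | ⟨η, hη⟩
  · simp [traceFlow]
  · have hmass : 0 < ∑' η : A, μ η :=
      Summable.tsum_pos (hμ.summable.subtype A) (fun η => (hμ.pos η.1).le) ⟨η, hη⟩ (hμ.pos η)
    rw [meanRate, ← mul_assoc, mul_inv_cancel₀ hmass.ne', one_mul, traceFlow]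

end RateMatrix

theorem stmt5_general {E : ℕ → Type*}
    (R : ∀ N, E N → E N → ℝ) (μ : ∀ N, E N → ℝ)
    (hR : ∀ N, IsRateMatrix (R N))
    (hμ : ∀ N, IsStationaryRate (R N) (μ N))
    (κ : ℕ) (ℰ : ∀ N, Fin κ → Set (E N))
    (hdis : ∀ N, Pairwise fun x y => Disjoint (ℰ N x) (ℰ N y))
    (θ : ℕ → ℝ) (r : Fin κ → Fin κ → ℝ)
    (hH0 : ∀ x y : Fin κ, x ≠ y →
      Tendsto (fun N => θ N * meanRate (R N) (μ N) (ℰ N x) (⋃ z, ℰ N z) (ℰ N y))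
        atTop (𝓝 (r x y)))
    (m : Fin κ → ℝ) (hm : ∀ x, Tendsto (fun N => ∑' η : ℰ N x, μ N η.1) atTop (𝓝 (m x))) :
    ∀ x : Fin κ,
      ∑ y ∈ Finset.univ.erase x, m y * r y x = m x * ∑ y ∈ Finset.univ.erase x, r x y := by
  intro x
  have hflow : ∀ a b, a ≠ b → Tendsto
      (fun N => θ N * traceFlow (R N) (μ N) (ℰ N a) (⋃ z, ℰ N z) (ℰ N b))
      atTop (𝓝 (m a * r a b)) := by
    intro a b hab
    simp_rw [← tsum_mul_meanRate (hμ _), mul_left_comm (θ _)]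
    exact (hm a).mul (hH0 a b hab)
  have hinto := tendsto_finsetSum (Finset.univ.erase x) fun y hy =>
    hflow y x (Finset.ne_of_mem_erase hy)
  have hfrom := tendsto_finsetSum (Finset.univ.erase x) fun y hy =>
    hflow x y (Finset.ne_of_mem_erase hy).symm
  simp_rw [← Finset.mul_sum, traceFlow_balance (hR _) (hμ _) (hdis _) x] at hinto hfrom
  exact tendsto_nhds_unique hinto hfrom

/-- Part of Proposition 2.3: under (H0) and (H1), if `μ_N(ℰ^x_N) → m(x) > 0` for every `x`
and the asymptotic rates satisfy `Σ_{y≠x} r(x,y) > 0` for every `x` (no absorbing states),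
then `m` is a stationary measure for the asymptotic dynamics with rates `r`:
`Σ_{y≠x} m(y) r(y,x) = m(x) Σ_{y≠x} r(x,y)` for every `x`. -/
theorem stmt5 {E : ℕ → Type*} [∀ N, Countable (E N)]
    (R : ∀ N, E N → E N → ℝ) (μ : ∀ N, E N → ℝ)
    (hR : ∀ N, IsRateMatrix (R N)) (hirr : ∀ N, MCIrreducible (jumpProb (R N)))
    (hμ : ∀ N, IsStationaryRate (R N) (μ N))
    (κ : ℕ) (hκ : 2 ≤ κ) (ℰ : ∀ N, Fin κ → Set (E N))
    (hdis : ∀ N, Pairwise fun x y => Disjoint (ℰ N x) (ℰ N y))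
    (hne : ∀ N x, (ℰ N x).Nonempty)
    (θ : ℕ → ℝ) (hθ : ∀ N, 0 < θ N) (r : Fin κ → Fin κ → ℝ)
    (hH0 : ∀ x y : Fin κ, x ≠ y →
      Tendsto (fun N => θ N * meanRate (R N) (μ N) (ℰ N x) (⋃ z, ℰ N z) (ℰ N y))
        atTop (𝓝 (r x y)))
    (hH1 : ∀ x : Fin κ, ∃ ξ : ∀ N, E N, (∀ N, ξ N ∈ ℰ N x) ∧
      Tendsto
        (fun N => cap (jumpProb (R N)) (fun η => -R N η η * μ N η)
            (ℰ N x) ((⋃ y, ℰ N y) \ ℰ N x)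
          / ⨅ η : {η : E N // η ∈ ℰ N x ∧ η ≠ ξ N},
              cap (jumpProb (R N)) (fun η => -R N η η * μ N η) {η.1} {ξ N})
        atTop (𝓝 0))
    (m : Fin κ → ℝ) (hm : ∀ x, Tendsto (fun N => ∑' η : ℰ N x, μ N η.1) atTop (𝓝 (m x)))
    (hmpos : ∀ x, 0 < m x)
    (hnoabs : ∀ x : Fin κ, 0 < ∑ y ∈ Finset.univ.erase x, r x y) :
    ∀ x : Fin κ,
      ∑ y ∈ Finset.univ.erase x, m y * r y x = m x * ∑ y ∈ Finset.univ.erase x, r x y :=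
  stmt5_general R μ hR hμ κ ℰ hdis θ r hH0 m hm
end
end
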